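/- arXiv:2402.10046 — 5 statements merged into one kernel-verified Lean document; each statement's English description precedes it below -/
import Mathlib

section
/- Let π be the distribution on {-1/2, 1/2} × {0,1} with π_Y(0) = π_Y(1) = 1/2 and X = Y - 1/2 almost surely. For ε ∈ (0, 1/2), the predictor g with g(-1/2) = 1/2 - ε and g(1/2) = 1/2 + ε satisfies ECE_π(g) = 1/2 - ε, while the constant predictor g ≡ 1/2 satisfies ECE_π(g) = 0. -/
/-! For the first predictor the label is a function of the prediction (threshold it at `1/2`),
so it is its own conditional expectation given `g(X)` and the ECE is just `E|Y - g(X)|`.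
A constant predictor generates the trivial σ-algebra, so `E[Y | g(X)] = E[Y] = 1/2`. -/

open MeasureTheory Filter Set

/-- The expected calibration error of a predictor `g` with respect to a joint
distribution `π` of `(X, Y)`: `ECE_π(g) = E[|E[Y | g(X)] - g(X)|]`, where the conditional
expectation is with respect to the σ-algebra generated by `g(X)`. -/
noncomputable def ECE {α : Type*} [MeasurableSpace α] (π : Measure (α × ℝ)) (g : α → ℝ) : ℝ :=
  ∫ q, |(π[(fun r : α × ℝ => r.2) |
      MeasurableSpace.comap (fun r : α × ℝ => g r.1) Real.measurableSpace]) q - g q.1| ∂π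

/-- The 2-point distribution: `π_Y(0) = π_Y(1) = 1/2` and `X = Y - 1/2` almost surely,
i.e. the uniform mixture of point masses at `(-1/2, 0)` and `(1/2, 1)`. -/
noncomputable def twoPointDist : Measure (ℝ × ℝ) :=
  (1/2 : ENNReal) • Measure.dirac ((-(1/2) : ℝ), (0 : ℝ)) +
  (1/2 : ENNReal) • Measure.dirac (((1/2) : ℝ), (1 : ℝ))

section ExpectedCalibrationError

variable {α : Type*} [MeasurableSpace α] {π : Measure (α × ℝ)}

theorem ECE_eq_integral_abs_sub_of_ae_eq_comp [IsFiniteMeasure π] {g : α → ℝ} {φ : ℝ → ℝ}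
    (hg : Measurable g) (hφ : Measurable φ)
    (hY : (fun r : α × ℝ => r.2) =ᵐ[π] fun r => φ (g r.1))
    (hYi : Integrable (fun r : α × ℝ => r.2) π) :
    ECE π g = ∫ r, |r.2 - g r.1| ∂π := by
  set m := MeasurableSpace.comap (fun r : α × ℝ => g r.1) Real.measurableSpace
  have hm : m ≤ Prod.instMeasurableSpace := (hg.comp measurable_fst).comap_le
  have hYm : AEStronglyMeasurable[m] (fun r : α × ℝ => r.2) π :=
    ⟨_, (hφ.comp (comap_measurable _)).stronglyMeasurable, hY⟩
  refine integral_congr_ae ?_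
  filter_upwards [condExp_of_aestronglyMeasurable' hm hYm hYi] with r hr
  rw [hr]

theorem ECE_const [IsProbabilityMeasure π] (c : ℝ) :
    ECE π (fun _ => c) = |∫ r, r.2 ∂π - c| := by
  simp only [ECE, MeasurableSpace.comap_const, condExp_bot, integral_const, probReal_univ,
    one_smul]

end ExpectedCalibrationError

instance : IsProbabilityMeasure twoPointDist :=
  ⟨by simp [twoPointDist, ENNReal.inv_two_add_inv_two]⟩

theorem ae_twoPointDist_iff {p : ℝ × ℝ → Prop} :
    (∀ᵐ r ∂twoPointDist, p r) ↔ p (-(1/2), 0) ∧ p (1/2, 1) := by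
  simp [twoPointDist, ae_add_measure_iff, ae_dirac_eq]

theorem integrable_twoPointDist (f : ℝ × ℝ → ℝ) : Integrable f twoPointDist :=
  ((integrable_dirac enorm_lt_top).smul_measure (by norm_num)).add_measure
    ((integrable_dirac enorm_lt_top).smul_measure (by norm_num))

theorem integral_twoPointDist (f : ℝ × ℝ → ℝ) :
    ∫ r, f r ∂twoPointDist = (f (-(1/2), 0) + f (1/2, 1)) / 2 := by
  rw [twoPointDist, integral_add_measure, integral_smul_measure, integral_smul_measure,
    integral_dirac, integral_dirac]
  · norm_num; ring
  all_goals exact (integrable_dirac enorm_lt_top).smul_measure (by norm_num)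

/-- For the 2-point distribution and `ε ∈ (0, 1/2)`, the predictor with
`g(-1/2) = 1/2 - ε`, `g(1/2) = 1/2 + ε` has `ECE = 1/2 - ε`, while the constant
predictor `1/2` has `ECE = 0`. -/
theorem stmt1 (ε : ℝ) (hε : ε ∈ Set.Ioo (0 : ℝ) (1/2)) :
    ECE twoPointDist (fun x => if x < 0 then 1/2 - ε else 1/2 + ε) = 1/2 - ε ∧
    ECE twoPointDist (fun _ => (1/2 : ℝ)) = 0 := by
  obtain ⟨hε_pos, hε_lt⟩ := hε
  set g : ℝ → ℝ := fun x => if x < 0 then 1/2 - ε else 1/2 + ε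
  have hg : Measurable g := Measurable.ite measurableSet_Iio measurable_const measurable_const
  have hY : (fun r : ℝ × ℝ => r.2) =ᵐ[twoPointDist] fun r => if g r.1 < 1/2 then 0 else 1 := by
    refine ae_twoPointDist_iff.2 ?_
    constructor <;> norm_num [g] <;> linarith
  constructor
  · rw [ECE_eq_integral_abs_sub_of_ae_eq_comp hg
      (Measurable.ite measurableSet_Iio measurable_const measurable_const) hY
      (integrable_twoPointDist _), integral_twoPointDist]
    norm_num [g]
    rw [abs_of_neg (by linarith), abs_of_pos (by linarith)]
    ring
  · rw [ECE_const, integral_twoPointDist]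
    norm_num
end

section
/- Let (Ω, Σ, ℙ) be a probability space, f ∈ L¹(Ω; ℙ), and let g, g₁, g₂, ... be real-valued random variables on Ω with gₙ → g in probability. Then liminf_{n→∞} ‖E[f | σ(gₙ)]‖₁ ≥ ‖E[f | σ(g)]‖₁. -/
/-!
Duality: writing `E[f | σ(g)] = H ∘ g`, the sign of `H` is approximated in `L¹(|H| d(g₊ℙ))` by
continuous functions `ψ` with `|ψ| ≤ 1`, so `‖E[f | σ(g)]‖₁ ≤ ∫ ψ(g) f + ε` for such a `ψ`.
For each fixed `ψ`, `∫ ψ(gₙ) f = ∫ ψ(gₙ) E[f | σ(gₙ)] ≤ ‖E[f | σ(gₙ)]‖₁`, and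
`∫ ψ(gₙ) f → ∫ ψ(g) f` by dominated convergence along a.e. convergent subsequences.
-/
open MeasureTheory Filter Topology

lemma abs_sub_clamp_le {a b : ℝ} (ha : |a| ≤ 1) : |a - max (-1) (min 1 b)| ≤ |a - b| := by
  rw [abs_le] at ha
  grind [abs_le, le_abs_self, neg_abs_le]

section Approximation

variable {α : Type*} [TopologicalSpace α] [NormalSpace α] [MeasurableSpace α] [BorelSpace α]

lemma exists_continuous_abs_le_one_integral_abs_sub_le (ρ : Measure α) [IsFiniteMeasure ρ]
    [ρ.WeaklyRegular] {s : α → ℝ} (hs : Measurable s) (hs_le : ∀ y, |s y| ≤ 1)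
    {ε : ℝ} (hε : 0 < ε) :
    ∃ ψ : α → ℝ, Continuous ψ ∧ (∀ y, |ψ y| ≤ 1) ∧ ∫ y, |s y - ψ y| ∂ρ ≤ ε := by
  have hs_int : Integrable s ρ :=
    .of_bound hs.aestronglyMeasurable 1 (.of_forall fun y => hs_le y)
  obtain ⟨ψ₀, hψ₀_close, hψ₀_int⟩ := hs_int.exists_boundedContinuous_integral_sub_le hε
  refine ⟨fun y => max (-1) (min 1 (ψ₀ y)), by fun_prop, fun y => ?_, ?_⟩
  · grind [abs_le]
  · calc ∫ y, |s y - max (-1) (min 1 (ψ₀ y))| ∂ρ ≤ ∫ y, |s y - ψ₀ y| ∂ρ :=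
          integral_mono_of_nonneg (.of_forall fun y => abs_nonneg _) (hs_int.sub hψ₀_int).abs
            (.of_forall fun y => abs_sub_clamp_le (hs_le y))
      _ ≤ ε := by simpa only [Real.norm_eq_abs] using hψ₀_close

end Approximation

section Duality

variable {α : Type*} [PseudoMetricSpace α] [MeasurableSpace α] [BorelSpace α]

lemma exists_continuous_integral_abs_le_integral_mul_add {ν : Measure α} {H : α → ℝ}
    (hH : Measurable H) (hH_int : Integrable H ν) {ε : ℝ} (hε : 0 < ε) :
    ∃ ψ : α → ℝ, Continuous ψ ∧ (∀ y, |ψ y| ≤ 1) ∧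
      ∫ y, |H y| ∂ν ≤ ∫ y, ψ y * H y ∂ν + ε := by
  set s : α → ℝ := fun y => if 0 ≤ H y then 1 else -1
  have hs : Measurable s := Measurable.ite (measurableSet_le measurable_const hH)
    measurable_const measurable_const
  have hs_le : ∀ y, |s y| ≤ 1 := fun y => by unfold s; split_ifs <;> norm_num
  have hsH : ∀ y, |H y| = s y * H y := fun y => by
    unfold s; split_ifs with h
    · simp [abs_of_nonneg h]
    · simp [abs_of_neg (not_le.mp h)]
  set ρ := ν.withDensity fun y => ‖H y‖₊
  have : IsFiniteMeasure ρ := isFiniteMeasure_withDensity hH_int.2.ne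
  have := Measure.WeaklyRegular.of_pseudoMetrizableSpace_of_isFiniteMeasure ρ
  obtain ⟨ψ, hψ, hψ_le, hψ_close⟩ :=
    exists_continuous_abs_le_one_integral_abs_sub_le ρ hs hs_le hε
  have hψH : Integrable (fun y => ψ y * H y) ν :=
    hH_int.bdd_mul hψ.aestronglyMeasurable (.of_forall fun y => hψ_le y)
  have h_err : Integrable (fun y => |s y - ψ y| * |H y|) ν :=
    hH_int.abs.bdd_mul (c := 2) (hs.sub hψ.measurable).abs.aestronglyMeasurable
      (.of_forall fun y => by
        rw [Real.norm_eq_abs, abs_abs]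
        linarith [abs_sub (s y) (ψ y), hs_le y, hψ_le y])
  have h_err_eq : ∫ y, |s y - ψ y| * |H y| ∂ν = ∫ y, |s y - ψ y| ∂ρ := by
    rw [integral_withDensity_eq_integral_smul hH.nnnorm]
    simp only [NNReal.smul_def, coe_nnnorm, Real.norm_eq_abs, smul_eq_mul, mul_comm]
  refine ⟨ψ, hψ, hψ_le, ?_⟩
  calc ∫ y, |H y| ∂ν ≤ ∫ y, (ψ y * H y + |s y - ψ y| * |H y|) ∂ν := by
        refine integral_mono hH_int.abs (hψH.add h_err) fun y => ?_
        have := le_abs_self ((s y - ψ y) * H y)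
        rw [abs_mul] at this
        linarith [hsH y]
    _ = ∫ y, ψ y * H y ∂ν + ∫ y, |s y - ψ y| ∂ρ := by rw [integral_add hψH h_err, h_err_eq]
    _ ≤ ∫ y, ψ y * H y ∂ν + ε := by linarith

end Duality

section Pullback

variable {Ω α : Type*} {m0 : MeasurableSpace Ω} [PseudoMetricSpace α] [MeasurableSpace α]
  [BorelSpace α]

lemma exists_continuous_integral_abs_le_integral_comp_mul_add {μ : Measure Ω} {X : Ω → α}
    (hX : Measurable X) {F : Ω → ℝ} (hF_int : Integrable F μ)
    (hF : StronglyMeasurable[MeasurableSpace.comap X ‹_›] F) {ε : ℝ} (hε : 0 < ε) :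
    ∃ ψ : α → ℝ, Continuous ψ ∧ (∀ y, |ψ y| ≤ 1) ∧
      ∫ ω, |F ω| ∂μ ≤ ∫ ω, ψ (X ω) * F ω ∂μ + ε := by
  obtain ⟨H, hH, rfl⟩ := hF.exists_eq_measurable_comp
  have hH_int : Integrable H (μ.map X) :=
    (integrable_map_measure hH.aestronglyMeasurable hX.aemeasurable).mpr hF_int
  obtain ⟨ψ, hψ, hψ_le, hψH⟩ :=
    exists_continuous_integral_abs_le_integral_mul_add hH.measurable hH_int hε
  refine ⟨ψ, hψ, hψ_le, ?_⟩
  rwa [integral_map hX.aemeasurable hH.measurable.abs.aestronglyMeasurable,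
    integral_map (f := fun y => ψ y * H y) hX.aemeasurable
      (hψ.measurable.mul hH.measurable).aestronglyMeasurable] at hψH

end Pullback

section CondExp

variable {Ω : Type*} {m m0 : MeasurableSpace Ω} {μ : Measure Ω} [IsFiniteMeasure μ]

lemma integral_mul_condExp (hm : m ≤ m0) {φ f : Ω → ℝ} (hφ : StronglyMeasurable[m] φ) {c : ℝ}
    (hφ_le : ∀ ω, |φ ω| ≤ c) (hf : Integrable f μ) :
    ∫ ω, φ ω * (μ[f | m]) ω ∂μ = ∫ ω, φ ω * f ω ∂μ := by
  calc ∫ ω, φ ω * (μ[f | m]) ω ∂μ = ∫ ω, (μ[φ * f | m]) ω ∂μ :=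
        integral_congr_ae (condExp_stronglyMeasurable_mul_of_bound hm hφ hf c
          (.of_forall hφ_le)).symm
    _ = ∫ ω, φ ω * f ω ∂μ := integral_condExp hm

lemma integral_mul_le_integral_abs_condExp (hm : m ≤ m0) {φ f : Ω → ℝ}
    (hφ : StronglyMeasurable[m] φ) (hφ_le : ∀ ω, |φ ω| ≤ 1) (hf : Integrable f μ) :
    ∫ ω, φ ω * f ω ∂μ ≤ ∫ ω, |(μ[f | m]) ω| ∂μ := by
  rw [← integral_mul_condExp hm hφ hφ_le hf]
  refine integral_mono ?_ integrable_condExp.abs fun ω => ?_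
  · exact integrable_condExp.bdd_mul (hφ.mono hm).aestronglyMeasurable (.of_forall hφ_le)
  · calc φ ω * (μ[f | m]) ω ≤ |φ ω| * |(μ[f | m]) ω| := by rw [← abs_mul]; exact le_abs_self _
      _ ≤ |(μ[f | m]) ω| := mul_le_of_le_one_left (abs_nonneg _) (hφ_le ω)

end CondExp

lemma tendsto_integral_comp_mul_of_tendstoInMeasure {Ω E : Type*} {m0 : MeasurableSpace Ω}
    {μ : Measure Ω} [PseudoMetricSpace E] {X : Ω → E} {Xs : ℕ → Ω → E}
    (hXs : ∀ n, AEStronglyMeasurable (Xs n) μ) (hconv : TendstoInMeasure μ Xs atTop X)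
    {ψ : E → ℝ} (hψ : Continuous ψ) {c : ℝ} (hψ_le : ∀ y, |ψ y| ≤ c) {f : Ω → ℝ}
    (hf : Integrable f μ) :
    Tendsto (fun n => ∫ ω, ψ (Xs n ω) * f ω ∂μ) atTop (𝓝 (∫ ω, ψ (X ω) * f ω ∂μ)) := by
  refine tendsto_of_subseq_tendsto fun ns hns => ?_
  obtain ⟨ms, -, hae⟩ := (hconv.comp hns).exists_seq_tendsto_ae
  refine ⟨ms, tendsto_integral_of_dominated_convergence (fun ω => c * |f ω|)
    (fun n => (hψ.comp_aestronglyMeasurable (hXs _)).mul hf.aestronglyMeasurable)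
    (hf.abs.const_mul c) (fun n => .of_forall fun ω => ?_) ?_⟩
  · rw [Real.norm_eq_abs, abs_mul]
    exact mul_le_mul_of_nonneg_right (hψ_le _) (abs_nonneg _)
  · filter_upwards [hae] with ω hω
    exact ((hψ.tendsto _).comp hω).mul tendsto_const_nhds

/-- If `f ∈ L¹(Ω; ℙ)` and `gₙ → g` in probability, then
`liminf ‖E[f | σ(gₙ)]‖₁ ≥ ‖E[f | σ(g)]‖₁`. -/
theorem stmt5 {Ω : Type*} {m0 : MeasurableSpace Ω} (μ : Measure Ω) [IsProbabilityMeasure μ]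
    (f : Ω → ℝ) (hf : Integrable f μ)
    (g : Ω → ℝ) (gs : ℕ → Ω → ℝ)
    (hg : Measurable g) (hgs : ∀ n, Measurable (gs n))
    (hconv : TendstoInMeasure μ gs atTop g) :
    ∫ ω, |(μ[f | MeasurableSpace.comap g Real.measurableSpace]) ω| ∂μ ≤
      atTop.liminf fun n =>
        ∫ ω, |(μ[f | MeasurableSpace.comap (gs n) Real.measurableSpace]) ω| ∂μ := by
  refine le_of_forall_pos_le_add fun ε hε => ?_
  obtain ⟨ψ, hψ, hψ_le, h_dual⟩ := exists_continuous_integral_abs_le_integral_comp_mul_add hg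
    integrable_condExp stronglyMeasurable_condExp hε
  have hψ_comp : ∀ {X : Ω → ℝ}, StronglyMeasurable[MeasurableSpace.comap X Real.measurableSpace]
      fun ω => ψ (X ω) := fun {X} => (hψ.measurable.comp (comap_measurable X)).stronglyMeasurable
  have h_lim := tendsto_integral_comp_mul_of_tendstoInMeasure
    (fun n => (hgs n).aestronglyMeasurable) hconv hψ hψ_le hf
  have h_le_liminf : ∫ ω, ψ (g ω) * f ω ∂μ ≤ atTop.liminf fun n =>
      ∫ ω, |(μ[f | MeasurableSpace.comap (gs n) Real.measurableSpace]) ω| ∂μ := by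
    rw [← h_lim.liminf_eq]
    exact liminf_le_liminf (.of_forall fun n =>
      integral_mul_le_integral_abs_condExp (hgs n).comap_le hψ_comp (fun _ => hψ_le _) hf)
      h_lim.isBoundedUnder_ge (isCoboundedUnder_ge_of_le atTop fun n => integral_abs_condExp_le f)
  calc ∫ ω, |(μ[f | MeasurableSpace.comap g Real.measurableSpace]) ω| ∂μ
      ≤ ∫ ω, ψ (g ω) * (μ[f | MeasurableSpace.comap g Real.measurableSpace]) ω ∂μ + ε := h_dual
    _ = ∫ ω, ψ (g ω) * f ω ∂μ + ε := by
      rw [integral_mul_condExp hg.comap_le hψ_comp (fun _ => hψ_le _) hf]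
    _ ≤ _ := by gcongr
end

section
/- Let Ω_X be a Polish space with Borel σ-algebra, π a probability distribution on Ω_X × {0,1}, and 1 ≤ p ≤ ∞. Then the functional ECE_π(g) = E_{(X,Y)∼π}[|E[Y | g(X)] - g(X)|] is lower semicontinuous on L^p(Ω_X; π_X). -/
open MeasureTheory Filter Set Topology
open scoped NNReal ENNReal

/-- clamp to [-1,1] -/
noncomputable def myClamp (x : ℝ) : ℝ := max (-1) (min 1 x)

lemma myClamp_abs_le (x : ℝ) : |myClamp x| ≤ 1 := by
  rw [abs_le]; constructor
  · exact le_max_left _ _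
  · exact max_le (by norm_num) (min_le_left _ _)

lemma myClamp_zero : myClamp 0 = 0 := by norm_num [myClamp]

lemma continuous_myClamp : Continuous myClamp :=
  continuous_const.max (continuous_const.min continuous_id)

lemma abs_sub_myClamp_le {a : ℝ} (ha : |a| ≤ 1) (b : ℝ) : |a - myClamp b| ≤ |a - b| := by
  rw [abs_le] at ha
  unfold myClamp
  rcases le_total b (-1) with h | h
  · rw [min_eq_right (by linarith), max_eq_left h]
    rw [abs_of_nonneg (by linarith), abs_of_nonneg (by linarith)]; linarith
  rcases le_total 1 b with h2 | h2
  · rw [min_eq_left h2, max_eq_right (by norm_num)]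
    rw [abs_of_nonpos (by linarith), abs_of_nonpos (by linarith)]; linarith
  · rw [min_eq_right h2, max_eq_right h]

section Aux
variable {α : Type*} [MeasurableSpace α]

theorem key_identity (π : Measure (α × ℝ)) [IsProbabilityMeasure π]
    (hY1 : ∀ᵐ q ∂π, |q.2| ≤ 1)
    {g : α → ℝ} (hg : Measurable g) (hgint : Integrable (fun q : α × ℝ => g q.1) π)
    {φ : ℝ → ℝ} (hφ : Measurable φ) (hφ1 : ∀ t, |φ t| ≤ 1) :
    ∫ q, (q.2 - g q.1) * φ (g q.1) ∂π
      = ∫ q, ((π[(fun r : α × ℝ => r.2) |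
          MeasurableSpace.comap (fun r : α × ℝ => g r.1) Real.measurableSpace]) q - g q.1)
          * φ (g q.1) ∂π := by
  have hm : MeasurableSpace.comap (fun r : α × ℝ => g r.1) Real.measurableSpace
      ≤ Prod.instMeasurableSpace := measurable_iff_comap_le.mp (hg.comp measurable_fst)
  have hφGmeas : Measurable (fun q : α × ℝ => φ (g q.1)) :=
    hφ.comp (hg.comp measurable_fst)
  set m : MeasurableSpace (α × ℝ) :=
    MeasurableSpace.comap (fun r : α × ℝ => g r.1) Real.measurableSpace with hm_def
  have hGm : Measurable[m] (fun q : α × ℝ => g q.1) := comap_measurable _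
  have hφG : StronglyMeasurable[m] (fun q : α × ℝ => φ (g q.1)) :=
    (hφ.comp hGm).stronglyMeasurable
  have hbd : ∀ᵐ q ∂π, ‖φ (g q.1)‖ ≤ 1 :=
    Eventually.of_forall fun q => by simpa [Real.norm_eq_abs] using hφ1 (g q.1)
  have hYint : Integrable (fun q : α × ℝ => q.2) π :=
    (integrable_const (1:ℝ)).mono' measurable_snd.aestronglyMeasurable
      (hY1.mono fun q hq => by simpa [Real.norm_eq_abs] using hq)
  have key : π[(fun q : α × ℝ => φ (g q.1)) * (fun q : α × ℝ => q.2)|m]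
      =ᵐ[π] (fun q : α × ℝ => φ (g q.1)) * π[fun q : α × ℝ => q.2|m] :=
    condExp_stronglyMeasurable_mul_of_bound hm hφG hYint 1 hbd
  have int1 : Integrable (fun q : α × ℝ => φ (g q.1) * q.2) π :=
    hYint.bdd_mul hφGmeas.aestronglyMeasurable hbd
  have int2 : Integrable (fun q : α × ℝ => φ (g q.1) * g q.1) π :=
    hgint.bdd_mul hφGmeas.aestronglyMeasurable hbd
  have int3 : Integrable (fun q : α × ℝ => φ (g q.1) * (π[fun r : α × ℝ => r.2|m]) q) π :=
    integrable_condExp.bdd_mul hφGmeas.aestronglyMeasurable hbd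
  have swap : ∫ q, φ (g q.1) * q.2 ∂π
      = ∫ q, φ (g q.1) * (π[fun r : α × ℝ => r.2|m]) q ∂π := by
    calc ∫ q, φ (g q.1) * q.2 ∂π
        = ∫ q, ((fun q : α × ℝ => φ (g q.1)) * (fun q : α × ℝ => q.2)) q ∂π := rfl
      _ = ∫ q, (π[(fun q : α × ℝ => φ (g q.1)) * (fun q : α × ℝ => q.2)|m]) q ∂π :=
          (integral_condExp hm).symm
      _ = ∫ q, ((fun q : α × ℝ => φ (g q.1)) * π[fun r : α × ℝ => r.2|m]) q ∂π :=
          integral_congr_ae key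
      _ = ∫ q, φ (g q.1) * (π[fun r : α × ℝ => r.2|m]) q ∂π := rfl
  calc ∫ q, (q.2 - g q.1) * φ (g q.1) ∂π
      = ∫ q, (φ (g q.1) * q.2 - φ (g q.1) * g q.1) ∂π := by
        congr 1; funext q; ring
    _ = ∫ q, φ (g q.1) * q.2 ∂π - ∫ q, φ (g q.1) * g q.1 ∂π := integral_sub int1 int2
    _ = ∫ q, φ (g q.1) * (π[fun r : α × ℝ => r.2|m]) q ∂π
        - ∫ q, φ (g q.1) * g q.1 ∂π := by rw [swap]
    _ = ∫ q, (φ (g q.1) * (π[fun r : α × ℝ => r.2|m]) q - φ (g q.1) * g q.1) ∂π :=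
        (integral_sub int3 int2).symm
    _ = ∫ q, ((π[fun r : α × ℝ => r.2|m]) q - g q.1) * φ (g q.1) ∂π := by
        congr 1; funext q; ring

theorem integral_le_ECE (π : Measure (α × ℝ)) [IsProbabilityMeasure π]
    (hY1 : ∀ᵐ q ∂π, |q.2| ≤ 1)
    {g : α → ℝ} (hg : Measurable g) (hgint : Integrable (fun q : α × ℝ => g q.1) π)
    {φ : ℝ → ℝ} (hφ : Measurable φ) (hφ1 : ∀ t, |φ t| ≤ 1) :
    ∫ q, (q.2 - g q.1) * φ (g q.1) ∂π ≤ ECE π g := by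
  rw [key_identity π hY1 hg hgint hφ hφ1]
  have hφGmeas : Measurable (fun q : α × ℝ => φ (g q.1)) :=
    hφ.comp (hg.comp measurable_fst)
  set m : MeasurableSpace (α × ℝ) :=
    MeasurableSpace.comap (fun r : α × ℝ => g r.1) Real.measurableSpace with hm_def
  have hbd : ∀ᵐ q ∂π, ‖φ (g q.1)‖ ≤ 1 :=
    Eventually.of_forall fun q => by simpa [Real.norm_eq_abs] using hφ1 (g q.1)
  have intD : Integrable (fun q : α × ℝ => (π[fun r : α × ℝ => r.2|m]) q - g q.1) π :=
    integrable_condExp.sub hgint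
  have intLHS : Integrable
      (fun q : α × ℝ => ((π[fun r : α × ℝ => r.2|m]) q - g q.1) * φ (g q.1)) π :=
    (intD.bdd_mul hφGmeas.aestronglyMeasurable hbd).congr
      (Eventually.of_forall fun q => mul_comm _ _)
  refine integral_mono intLHS intD.abs fun q => ?_
  refine le_trans (le_abs_self _) ?_
  rw [abs_mul]
  exact mul_le_of_le_one_right (abs_nonneg _) (hφ1 _)

theorem ECE_le_approx (π : Measure (α × ℝ)) [IsProbabilityMeasure π]
    (hY1 : ∀ᵐ q ∂π, |q.2| ≤ 1)
    {g : α → ℝ} (hg : Measurable g) (hgint : Integrable (fun q : α × ℝ => g q.1) π)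
    {ε : ℝ} (hε : 0 < ε) :
    ∃ φ : ℝ → ℝ, Continuous φ ∧ HasCompactSupport φ ∧ (∀ t, |φ t| ≤ 1) ∧
      ECE π g ≤ ∫ q, (q.2 - g q.1) * φ (g q.1) ∂π + ε := by
  classical
  have hm : MeasurableSpace.comap (fun r : α × ℝ => g r.1) Real.measurableSpace
      ≤ Prod.instMeasurableSpace := measurable_iff_comap_le.mp (hg.comp measurable_fst)
  set D : α × ℝ → ℝ := fun q => (π[(fun r : α × ℝ => r.2) |
      MeasurableSpace.comap (fun r : α × ℝ => g r.1) Real.measurableSpace]) q - g q.1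
    with hD_def
  have hDm : Measurable[MeasurableSpace.comap (fun r : α × ℝ => g r.1) Real.measurableSpace] D := by
    rw [hD_def]
    exact stronglyMeasurable_condExp.measurable.sub (comap_measurable _)
  have hD : Measurable D := hDm.mono hm le_rfl
  have hDint : Integrable D π := by
    rw [hD_def]; exact integrable_condExp.sub hgint
  -- the sign of D factors through g ∘ fst
  have hA : MeasurableSet[MeasurableSpace.comap (fun r : α × ℝ => g r.1) Real.measurableSpace]
      {q : α × ℝ | 0 ≤ D q} := measurableSet_le measurable_const hDm
  obtain ⟨B, hB, hGB⟩ := MeasurableSpace.measurableSet_comap.mp hA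
  set φ₀ : ℝ → ℝ := fun t => if t ∈ B then (1:ℝ) else -1 with hφ₀_def
  have hφ₀ : Measurable φ₀ := Measurable.ite hB measurable_const measurable_const
  have hφ₀1 : ∀ t, |φ₀ t| ≤ 1 := by
    intro t; by_cases h : t ∈ B <;> simp [hφ₀_def, h]
  have hsign : ∀ q : α × ℝ, φ₀ (g q.1) * D q = |D q| := by
    intro q
    by_cases hq : 0 ≤ D q
    · have hqA : g q.1 ∈ B := by
        have : q ∈ (fun r : α × ℝ => g r.1) ⁻¹' B := by rw [hGB]; exact hq
        exact this
      show (if g q.1 ∈ B then (1:ℝ) else -1) * D q = |D q|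
      rw [if_pos hqA, one_mul, abs_of_nonneg hq]
    · have hqA : g q.1 ∉ B := by
        have : q ∉ (fun r : α × ℝ => g r.1) ⁻¹' B := by rw [hGB]; exact hq
        exact this
      show (if g q.1 ∈ B then (1:ℝ) else -1) * D q = |D q|
      rw [if_neg hqA, abs_of_nonpos (le_of_not_ge hq)]; ring
  -- weighted measures
  set ρ : Measure (α × ℝ) := π.withDensity (fun q => ((‖D q‖₊ : ℝ≥0) : ℝ≥0∞)) with hρ_def
  haveI : IsFiniteMeasure ρ := by
    rw [hρ_def]
    exact isFiniteMeasure_withDensity hDint.2.ne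
  set ν : Measure ℝ := ρ.map (fun q : α × ℝ => g q.1) with hν_def
  haveI : IsFiniteMeasure ν := by
    rw [hν_def]
    exact Measure.isFiniteMeasure_map ρ _
  have hφ₀ν : Integrable φ₀ ν :=
    (integrable_const (1:ℝ)).mono' hφ₀.aestronglyMeasurable
      (Eventually.of_forall fun t => by simpa [Real.norm_eq_abs] using hφ₀1 t)
  obtain ⟨ψ, hψCS, hψint, hψcont, hψInt⟩ :=
    hφ₀ν.exists_hasCompactSupport_integral_sub_le hε
  refine ⟨myClamp ∘ ψ, continuous_myClamp.comp hψcont, hψCS.comp_left myClamp_zero,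
    fun t => myClamp_abs_le _, ?_⟩
  set φ : ℝ → ℝ := myClamp ∘ ψ with hφ_def
  have hφcont : Continuous φ := continuous_myClamp.comp hψcont
  have hφ1 : ∀ t, |φ t| ≤ 1 := fun t => myClamp_abs_le _
  -- the approximation estimate, in ν
  have est1 : ∫ t, |φ₀ t - φ t| ∂ν ≤ ε := by
    have h1 : ∀ t, |φ₀ t - φ t| ≤ ‖φ₀ t - ψ t‖ := fun t => by
      rw [Real.norm_eq_abs]; exact abs_sub_myClamp_le (hφ₀1 t) (ψ t)
    have int_a : Integrable (fun t => |φ₀ t - φ t|) ν :=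
      (integrable_const (2:ℝ)).mono'
        ((hφ₀.sub hφcont.measurable).abs).aestronglyMeasurable
        (Eventually.of_forall fun t => by
          have := abs_sub_abs_le_abs_sub (φ₀ t) (φ t)
          have h2 := abs_sub (φ₀ t) (φ t)
          simp only [Real.norm_eq_abs, abs_abs]
          calc |φ₀ t - φ t| ≤ |φ₀ t| + |φ t| := abs_sub _ _
            _ ≤ 2 := by have := hφ₀1 t; have := hφ1 t; linarith)
    calc ∫ t, |φ₀ t - φ t| ∂ν ≤ ∫ t, ‖φ₀ t - ψ t‖ ∂ν :=
          integral_mono int_a (hφ₀ν.sub hψInt).norm h1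
      _ ≤ ε := hψint
  -- transfer: ν-integral to ρ-integral
  have est2 : ∫ q, |φ₀ (g q.1) - φ (g q.1)| ∂ρ ≤ ε := by
    have hmeas : AEStronglyMeasurable (fun t => |φ₀ t - φ t|) ν :=
      ((hφ₀.sub hφcont.measurable).abs).aestronglyMeasurable
    have hGae : AEMeasurable (fun q : α × ℝ => g q.1) ρ :=
      (hg.comp measurable_fst).aemeasurable
    rw [hν_def] at est1
    rwa [integral_map hGae hmeas] at est1
  -- transfer: ρ-integral to π-integral
  have hρ_int : ∀ (h : α × ℝ → ℝ), Measurable h →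
      ∫ q, h q ∂ρ = ∫ q, |D q| * h q ∂π := by
    intro h hh
    rw [hρ_def, integral_withDensity_eq_integral_smul hD.nnnorm]
    refine integral_congr_ae (Eventually.of_forall fun q => ?_)
    simp [NNReal.smul_def, Real.norm_eq_abs]
  have est3 : ∫ q, |D q| * |φ₀ (g q.1) - φ (g q.1)| ∂π ≤ ε := by
    rw [← hρ_int (fun q : α × ℝ => |φ₀ (g q.1) - φ (g q.1)|)
      (by exact ((hφ₀.sub hφcont.measurable).comp (hg.comp measurable_fst)).abs)]
    exact est2
  -- integrability of the products against D
  have bd2 : ∀ᵐ q ∂π, ‖φ₀ (g q.1) - φ (g q.1)‖ ≤ 2 :=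
    Eventually.of_forall fun q => by
      simp only [Real.norm_eq_abs]
      calc |φ₀ (g q.1) - φ (g q.1)| ≤ |φ₀ (g q.1)| + |φ (g q.1)| := abs_sub _ _
        _ ≤ 2 := by have := hφ₀1 (g q.1); have := hφ1 (g q.1); linarith
  have int_sub : Integrable (fun q : α × ℝ => (φ₀ (g q.1) - φ (g q.1)) * D q) π :=
    (hDint.bdd_mul
      (((hφ₀.sub hφcont.measurable).comp (hg.comp measurable_fst)).aestronglyMeasurable) bd2)
  have int_φD : Integrable (fun q : α × ℝ => φ (g q.1) * D q) π :=
    (hDint.bdd_mul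
      ((hφcont.measurable.comp (hg.comp measurable_fst)).aestronglyMeasurable)
      (Eventually.of_forall fun q => by simpa [Real.norm_eq_abs] using hφ1 (g q.1)))
  -- assemble
  have key := key_identity π hY1 hg hgint hφcont.measurable hφ1
  have hECE : ECE π g = ∫ q, φ₀ (g q.1) * D q ∂π := by
    show ∫ q, |D q| ∂π = ∫ q, φ₀ (g q.1) * D q ∂π
    exact (integral_congr_ae (Eventually.of_forall fun q => (hsign q).symm))
  have split : ∫ q, φ₀ (g q.1) * D q ∂π
      = ∫ q, φ (g q.1) * D q ∂π + ∫ q, (φ₀ (g q.1) - φ (g q.1)) * D q ∂π := by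
    rw [← integral_add int_φD int_sub]
    congr 1; funext q; ring
  have berr : ∫ q, (φ₀ (g q.1) - φ (g q.1)) * D q ∂π ≤ ε := by
    calc ∫ q, (φ₀ (g q.1) - φ (g q.1)) * D q ∂π
        ≤ ∫ q, |φ₀ (g q.1) - φ (g q.1)| * |D q| ∂π := le_trans (le_abs_self _) (by
          simpa [Real.norm_eq_abs, abs_mul] using
            norm_integral_le_integral_norm (μ := π)
              (fun q : α × ℝ => (φ₀ (g q.1) - φ (g q.1)) * D q))
      _ = ∫ q, |D q| * |φ₀ (g q.1) - φ (g q.1)| ∂π := by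
          refine integral_congr_ae (Eventually.of_forall fun q => ?_); ring
      _ ≤ ε := est3
  have last : ∫ q, (q.2 - g q.1) * φ (g q.1) ∂π = ∫ q, φ (g q.1) * D q ∂π := by
    rw [key]
    exact integral_congr_ae (Eventually.of_forall fun q => mul_comm _ _)
  rw [hECE, split, last]
  linarith
theorem ECE_bound (π : Measure (α × ℝ)) [IsProbabilityMeasure π]
    (hY1 : ∀ᵐ q ∂π, |q.2| ≤ 1)
    {g : α → ℝ} (hgint : Integrable (fun q : α × ℝ => g q.1) π) :
    ECE π g ≤ 1 + ∫ q, |g q.1| ∂π := by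
  have hYint : Integrable (fun q : α × ℝ => q.2) π :=
    (integrable_const (1:ℝ)).mono' measurable_snd.aestronglyMeasurable
      (hY1.mono fun q hq => by simpa [Real.norm_eq_abs] using hq)
  unfold ECE
  have h1 : ∫ q, |(π[(fun r : α × ℝ => r.2) |
        MeasurableSpace.comap (fun r : α × ℝ => g r.1) Real.measurableSpace]) q - g q.1| ∂π
      ≤ ∫ q, (|(π[(fun r : α × ℝ => r.2) |
        MeasurableSpace.comap (fun r : α × ℝ => g r.1) Real.measurableSpace]) q| + |g q.1|) ∂π :=
    integral_mono (integrable_condExp.sub hgint).abs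
      (integrable_condExp.abs.add hgint.abs) (fun q => abs_sub _ _)
  rw [integral_add integrable_condExp.abs hgint.abs] at h1
  have h2 := integral_abs_condExp_le
    (m := MeasurableSpace.comap (fun r : α × ℝ => g r.1) Real.measurableSpace)
    (μ := π) (fun r : α × ℝ => r.2)
  have h3 : ∫ q, |(fun r : α × ℝ => r.2) q| ∂π ≤ ∫ (_ : α × ℝ), (1:ℝ) ∂π :=
    integral_mono_ae hYint.abs (integrable_const 1) hY1
  have h4 : ∫ (_ : α × ℝ), (1:ℝ) ∂π = 1 := by simp
  linarith

theorem tendsto_L (π : Measure (α × ℝ)) [IsProbabilityMeasure π]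
    (hY1 : ∀ᵐ q ∂π, |q.2| ≤ 1)
    (p : ENNReal) (hp : 1 ≤ p)
    (g : α → ℝ) (gs : ℕ → α → ℝ)
    (hg : Measurable g) (hgs : ∀ n, Measurable (gs n))
    (hconv : Tendsto (fun n => eLpNorm (gs n - g) p (π.map Prod.fst)) atTop (𝓝 0))
    {φ : ℝ → ℝ} (hφc : Continuous φ) (hφCS : HasCompactSupport φ) (hφ1 : ∀ t, |φ t| ≤ 1) :
    Tendsto (fun n => ∫ q, (q.2 - gs n q.1) * φ (gs n q.1) ∂π) atTop
      (𝓝 (∫ q, (q.2 - g q.1) * φ (g q.1) ∂π)) := by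
  have hψCS : HasCompactSupport (fun x : ℝ => x * φ x) :=
    HasCompactSupport.mul_left hφCS
  obtain ⟨M, hM⟩ := (continuous_id.mul hφc).bounded_above_of_compact_support hψCS
  refine tendsto_of_subseq_tendsto fun ns hns => ?_
  have h1 : Tendsto (fun k => eLpNorm (gs (ns k) - g) p (π.map Prod.fst)) atTop (𝓝 0) :=
    hconv.comp hns
  have h2 : TendstoInMeasure (π.map Prod.fst) (fun k => gs (ns k)) atTop g :=
    tendstoInMeasure_of_tendsto_eLpNorm (zero_lt_one.trans_le hp).ne'
      (fun k => (hgs (ns k)).aestronglyMeasurable) hg.aestronglyMeasurable h1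
  obtain ⟨ms, hms, hae⟩ := h2.exists_seq_tendsto_ae
  refine ⟨ms, ?_⟩
  have hae' : ∀ᵐ q ∂π, Tendsto (fun k => gs (ns (ms k)) q.1) atTop (𝓝 (g q.1)) :=
    ae_of_ae_map measurable_fst.aemeasurable hae
  refine tendsto_integral_of_dominated_convergence (fun _ => 1 + M) ?_ ?_ ?_ ?_
  · intro k
    exact ((measurable_snd.sub ((hgs _).comp measurable_fst)).mul
      (hφc.measurable.comp ((hgs _).comp measurable_fst))).aestronglyMeasurable
  · exact integrable_const _
  · intro k
    filter_upwards [hY1] with q hq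
    set a := gs (ns (ms k)) q.1
    have e1 : |q.2 * φ a| ≤ 1 := by
      rw [abs_mul]
      exact mul_le_one₀ hq (abs_nonneg _) (hφ1 a)
    have e2 : |a * φ a| ≤ M := by have := hM a; rwa [Real.norm_eq_abs] at this
    calc ‖(q.2 - a) * φ a‖ = |q.2 * φ a - a * φ a| := by
          rw [Real.norm_eq_abs]; ring_nf
      _ ≤ |q.2 * φ a| + |a * φ a| := abs_sub _ _
      _ ≤ 1 + M := add_le_add e1 e2
  · filter_upwards [hae'] with q hq
    exact (tendsto_const_nhds.sub hq).mul ((hφc.tendsto _).comp hq)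
end Aux

/-- For a Polish space `Ω_X`, a distribution `π` on `Ω_X × {0,1}`, and
`1 ≤ p ≤ ∞`, the functional `ECE_π` is (sequentially) lower semicontinuous on
`L^p(Ω_X; π_X)`: if `gₙ → g` in `L^p(π_X)`, then `liminf ECE_π(gₙ) ≥ ECE_π(g)`. -/
theorem stmt6 {ΩX : Type*} [TopologicalSpace ΩX] [PolishSpace ΩX]
    [MeasurableSpace ΩX] [BorelSpace ΩX]
    (π : Measure (ΩX × ℝ)) [IsProbabilityMeasure π]
    (hY : ∀ᵐ q ∂π, q.2 = 0 ∨ q.2 = 1)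
    (p : ENNReal) (hp : 1 ≤ p)
    (g : ΩX → ℝ) (gs : ℕ → ΩX → ℝ)
    (hg : Measurable g) (hgs : ∀ n, Measurable (gs n))
    (hgLp : MemLp g p (π.map Prod.fst)) (hgsLp : ∀ n, MemLp (gs n) p (π.map Prod.fst))
    (hconv : Tendsto (fun n => eLpNorm (gs n - g) p (π.map Prod.fst)) atTop (𝓝 0)) :
    ECE π g ≤ atTop.liminf fun n => ECE π (gs n) := by
  haveI : IsProbabilityMeasure (π.map Prod.fst) :=
    Measure.isProbabilityMeasure_map measurable_fst.aemeasurable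
  have hY1 : ∀ᵐ q ∂π, |q.2| ≤ 1 := by
    filter_upwards [hY] with q hq
    rcases hq with h | h <;> simp [h]
  have hgint : Integrable (fun q : ΩX × ℝ => g q.1) π :=
    (integrable_map_measure hg.aestronglyMeasurable measurable_fst.aemeasurable).mp
      (hgLp.integrable hp)
  have hgsint : ∀ n, Integrable (fun q : ΩX × ℝ => gs n q.1) π := fun n =>
    (integrable_map_measure (hgs n).aestronglyMeasurable measurable_fst.aemeasurable).mp
      ((hgsLp n).integrable hp)
  refine le_of_forall_pos_le_add fun ε hε => ?_
  obtain ⟨φ, hφc, hφCS, hφ1, hφle⟩ := ECE_le_approx π hY1 hg hgint hε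
  have hT := tendsto_L π hY1 p hp g gs hg hgs hconv hφc hφCS hφ1
  have hL_le : ∀ n, ∫ q, (q.2 - gs n q.1) * φ (gs n q.1) ∂π ≤ ECE π (gs n) := fun n =>
    integral_le_ECE π hY1 (hgs n) (hgsint n) hφc.measurable hφ1
  have hcobdd : IsCoboundedUnder (· ≥ ·) atTop fun n => ECE π (gs n) := by
    have hev : ∀ᶠ n in atTop, eLpNorm (gs n - g) p (π.map Prod.fst) ≤ 1 :=
      hconv.eventually_le_const (by norm_num)
    refine isCoboundedUnder_ge_of_eventually_le atTop
      (x := 2 + ∫ x, |g x| ∂(π.map Prod.fst)) ?_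
    filter_upwards [hev] with n hn
    have b1 : ECE π (gs n) ≤ 1 + ∫ q, |gs n q.1| ∂π := ECE_bound π hY1 (hgsint n)
    have e1 : ∫ q, |gs n q.1| ∂π = ∫ x, |gs n x| ∂(π.map Prod.fst) :=
      (integral_map measurable_fst.aemeasurable
        ((hgs n).abs.aestronglyMeasurable)).symm
    have hgabs : Integrable (fun x => |g x|) (π.map Prod.fst) := (hgLp.integrable hp).abs
    have hdabs : Integrable (fun x => |gs n x - g x|) (π.map Prod.fst) :=
      (((hgsLp n).integrable hp).sub (hgLp.integrable hp)).abs
    have e2 : ∫ x, |gs n x| ∂(π.map Prod.fst)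
        ≤ ∫ x, |g x| ∂(π.map Prod.fst) + ∫ x, |gs n x - g x| ∂(π.map Prod.fst) := by
      rw [← integral_add hgabs hdabs]
      refine integral_mono ((hgsLp n).integrable hp).abs (hgabs.add hdabs) fun x => ?_
      calc |gs n x| = |g x + (gs n x - g x)| := by ring_nf
        _ ≤ |g x| + |gs n x - g x| := abs_add_le _ _
    have e3 : ∫ x, |gs n x - g x| ∂(π.map Prod.fst) ≤ 1 := by
      have m1 : ∫ x, |gs n x - g x| ∂(π.map Prod.fst)
          = (eLpNorm (gs n - g) 1 (π.map Prod.fst)).toReal := by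
        rw [eLpNorm_one_eq_lintegral_enorm]
        simpa [Real.norm_eq_abs] using
          integral_norm_eq_lintegral_enorm
            (f := fun x => gs n x - g x) (μ := π.map Prod.fst)
            (((hgs n).sub hg).aestronglyMeasurable)
      have m2 : eLpNorm (gs n - g) 1 (π.map Prod.fst)
          ≤ eLpNorm (gs n - g) p (π.map Prod.fst) :=
        eLpNorm_le_eLpNorm_of_exponent_le hp
          (((hgs n).sub hg).aestronglyMeasurable)
      rw [m1]
      have : eLpNorm (gs n - g) 1 (π.map Prod.fst) ≤ 1 := m2.trans hn
      calc (eLpNorm (gs n - g) 1 (π.map Prod.fst)).toReal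
          ≤ (1 : ℝ≥0∞).toReal := ENNReal.toReal_mono (by norm_num) this
        _ = 1 := by simp
    linarith
  have h2 : (atTop.liminf fun n => ∫ q, (q.2 - gs n q.1) * φ (gs n q.1) ∂π)
      ≤ atTop.liminf fun n => ECE π (gs n) :=
    liminf_le_liminf (Eventually.of_forall hL_le) hT.isBoundedUnder_ge
      hcobdd
  calc ECE π g ≤ ∫ q, (q.2 - g q.1) * φ (g q.1) ∂π + ε := hφle
    _ = (atTop.liminf fun n => ∫ q, (q.2 - gs n q.1) * φ (gs n q.1) ∂π) + ε := by
        rw [hT.liminf_eq]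
    _ ≤ (atTop.liminf fun n => ECE π (gs n)) + ε := by linarith
end

section
/- Let (Ω, ℬ(Ω), ℙ) be a probability space on a Polish space Ω with its Borel σ-algebra and let 1 ≤ p ≤ ∞. Then the set of functions f ∈ L^p(Ω; ℙ) that are almost surely equal to a measurable bijection from Ω onto a standard Borel space is dense in L^p(Ω; ℙ). -/
open MeasureTheory Set

/-- On a Polish probability space, the set of functions in `L^p` that are
(almost surely equal to) measurable bijections onto a standard Borel space — i.e. injective
measurable maps whose range is a Borel subset of `ℝ` — is dense in `L^p`. -/
theorem stmt8 {Ω : Type*} [TopologicalSpace Ω] [PolishSpace Ω]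
    [MeasurableSpace Ω] [BorelSpace Ω]
    (μ : Measure Ω) [IsProbabilityMeasure μ]
    (p : ENNReal) (hp : 1 ≤ p)
    (f : Ω → ℝ) (hf : MemLp f p μ) (ε : ENNReal) (hε : 0 < ε) :
    ∃ f' : Ω → ℝ, Measurable f' ∧ Function.Injective f' ∧
      MeasurableSet (Set.range f') ∧ MemLp f' p μ ∧ eLpNorm (f - f') p μ < ε := by
  -- a measurable version of f
  set mf : Ω → ℝ := hf.1.mk f with hmf_def
  have hmf_meas : Measurable mf := hf.1.measurable_mk
  have hmf_ae : f =ᵐ[μ] mf := hf.1.ae_eq_mk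
  have hmf_mem : MemLp mf p μ := hf.ae_eq hmf_ae
  -- parameters
  set η : ENNReal := min ε 1 with hη_def
  have hη_pos : 0 < η := lt_min hε zero_lt_one
  have hη_ne_top : η ≠ ⊤ := ne_top_of_le_ne_top ENNReal.one_ne_top (min_le_right _ _)
  have hη_toReal_pos : 0 < η.toReal := ENNReal.toReal_pos hη_pos.ne' hη_ne_top
  set δ : ℝ := η.toReal / 4 with hδ_def
  have hδ_pos : 0 < δ := by positivity
  set c : ℝ := δ / 8 with hc_def
  have hc_pos : 0 < c := by positivity
  -- the grid rounding
  set g : Ω → ℝ := fun ω => δ * ⌊mf ω / δ⌋ with hg_def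
  have hg_meas : Measurable g :=
    measurable_const.mul (measurable_from_top.comp ((hmf_meas.div_const δ).floor))
  have key : ∀ ω, δ * (⌊mf ω / δ⌋ : ℝ) ≤ mf ω ∧ mf ω < δ * (⌊mf ω / δ⌋ : ℝ) + δ := by
    intro ω
    have h1 := Int.floor_le (mf ω / δ)
    have h2 := Int.lt_floor_add_one (mf ω / δ)
    constructor
    · calc δ * (⌊mf ω / δ⌋ : ℝ) ≤ δ * (mf ω / δ) := mul_le_mul_of_nonneg_left h1 hδ_pos.le
        _ = mf ω := by field_simp
    · have h3 := mul_lt_mul_of_pos_left h2 hδ_pos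
      rw [mul_add, mul_one] at h3
      calc mf ω = δ * (mf ω / δ) := by field_simp
        _ < δ * (⌊mf ω / δ⌋ : ℝ) + δ := h3
  have hg_close : ∀ ω, |mf ω - g ω| ≤ δ := by
    intro ω
    have h := key ω
    have hgω : g ω = δ * (⌊mf ω / δ⌋ : ℝ) := rfl
    rw [abs_le, hgω]
    constructor <;> [linarith [h.2]; linarith [h.1]]
  have hg_gap : ∀ ω ω', g ω ≠ g ω' → δ ≤ |g ω - g ω'| := by
    intro ω ω' hne
    have hne' : (⌊mf ω / δ⌋ : ℤ) ≠ ⌊mf ω' / δ⌋ := by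
      intro h; apply hne; simp only [hg_def, h]
    have h1 : (1 : ℝ) ≤ |(⌊mf ω / δ⌋ : ℝ) - (⌊mf ω' / δ⌋ : ℝ)| := by
      have h : (1 : ℤ) ≤ |⌊mf ω / δ⌋ - ⌊mf ω' / δ⌋| := Int.one_le_abs (sub_ne_zero.2 hne')
      calc (1:ℝ) ≤ ((|⌊mf ω / δ⌋ - ⌊mf ω' / δ⌋| : ℤ) : ℝ) := by exact_mod_cast h
        _ = |(⌊mf ω / δ⌋ : ℝ) - (⌊mf ω' / δ⌋ : ℝ)| := by push_cast; rfl
    have h2 : |g ω - g ω'| = δ * |(⌊mf ω / δ⌋ : ℝ) - (⌊mf ω' / δ⌋ : ℝ)| := by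
      have hgω : g ω = δ * (⌊mf ω / δ⌋ : ℝ) := rfl
      have hgω' : g ω' = δ * (⌊mf ω' / δ⌋ : ℝ) := rfl
      rw [hgω, hgω', ← mul_sub, abs_mul, abs_of_pos hδ_pos]
    rw [h2]
    nlinarith
  -- injective embedding into ℝ, squashed by arctan
  obtain ⟨i, hi⟩ := exists_measurableEmbedding_real Ω
  set e : Ω → ℝ := fun ω => Real.arctan (i ω) with he_def
  have he_meas : Measurable e := Real.measurable_arctan.comp hi.measurable
  have he_inj : Function.Injective e := Real.arctan_injective.comp hi.injective
  have he_bound : ∀ ω, |e ω| ≤ 2 := by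
    intro ω
    have h1 := Real.arctan_lt_pi_div_two (i ω)
    have h2 := Real.neg_pi_div_two_lt_arctan (i ω)
    have hpi : Real.pi < 4 := by linarith [Real.pi_lt_d2]
    have hgω : e ω = Real.arctan (i ω) := rfl
    rw [abs_le, hgω]
    constructor <;> [linarith; linarith]
  -- the candidate
  set f' : Ω → ℝ := fun ω => g ω + c * e ω with hf'_def
  have hf'_meas : Measurable f' := hg_meas.add (he_meas.const_mul c)
  have hf'_inj : Function.Injective f' := by
    intro ω ω' h
    have hfω : g ω + c * e ω = g ω' + c * e ω' := h
    have hgg : g ω = g ω' := by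
      by_contra hne
      have h1 : |g ω - g ω'| = c * |e ω' - e ω| := by
        have heq : g ω - g ω' = c * (e ω' - e ω) := by linarith
        rw [heq, abs_mul, abs_of_pos hc_pos]
      have h2 : |e ω' - e ω| ≤ 4 := by
        have hb1 := he_bound ω; have hb2 := he_bound ω'
        rw [abs_le] at hb1 hb2 ⊢
        constructor <;> [linarith [hb1.1, hb2.2]; linarith [hb1.2, hb2.1]]
      have h3 := hg_gap ω ω' hne
      nlinarith [mul_le_mul_of_nonneg_left h2 hc_pos.le]
    have : e ω = e ω' := by
      have : c * e ω = c * e ω' := by rw [hgg] at hfω; linarith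
      exact mul_left_cancel₀ hc_pos.ne' this
    exact he_inj this
  have hf'_range : MeasurableSet (Set.range f') :=
    (hf'_meas.measurableEmbedding hf'_inj).measurableSet_range
  -- pointwise closeness to mf
  have hclose : ∀ ω, ‖mf ω - f' ω‖ ≤ δ + c * 2 := by
    intro ω
    have h1 := hg_close ω
    have h2 := he_bound ω
    have hfω : f' ω = g ω + c * e ω := rfl
    rw [Real.norm_eq_abs, hfω]
    have heq : mf ω - (g ω + c * e ω) = (mf ω - g ω) + (-(c * e ω)) := by ring
    rw [heq]
    calc |(mf ω - g ω) + (-(c * e ω))| ≤ |mf ω - g ω| + |(-(c * e ω))| := abs_add_le _ _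
      _ ≤ δ + c * 2 := by
          rw [abs_neg, abs_mul, abs_of_pos hc_pos]
          have := mul_le_mul_of_nonneg_left h2 hc_pos.le
          linarith
  -- Memℒp f'
  have hdiff_mem : MemLp (fun ω => f' ω - mf ω) p μ := by
    refine MemLp.mono_exponent (q := ⊤) ?_ le_top
    refine memLp_top_of_bound ((hf'_meas.sub hmf_meas).aestronglyMeasurable) (δ + c * 2) ?_
    filter_upwards with ω
    rw [Real.norm_eq_abs, abs_sub_comm, ← Real.norm_eq_abs]
    exact hclose ω
  have hf'_mem : MemLp f' p μ := by
    have heq : f' = fun ω => mf ω + (f' ω - mf ω) := by funext ω; ring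
    rw [heq]
    exact hmf_mem.add hdiff_mem
  -- the eLpNorm bound
  refine ⟨f', hf'_meas, hf'_inj, hf'_range, hf'_mem, ?_⟩
  have heq : eLpNorm (f - f') p μ = eLpNorm (mf - f') p μ := by
    apply eLpNorm_congr_ae
    filter_upwards [hmf_ae] with ω hω
    simp [Pi.sub_apply, hω]
  rw [heq]
  have hb := eLpNorm_le_of_ae_bound (μ := μ) (p := p) (f := mf - f') (C := δ + c * 2)
    (Filter.Eventually.of_forall fun ω => hclose ω)
  rw [measure_univ, ENNReal.one_rpow, one_mul] at hb
  refine lt_of_le_of_lt hb ?_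
  have hlt : ENNReal.ofReal (δ + c * 2) < η := by
    have h1 : δ + c * 2 < η.toReal := by rw [hc_def, hδ_def]; linarith
    calc ENNReal.ofReal (δ + c * 2) < ENNReal.ofReal η.toReal :=
          (ENNReal.ofReal_lt_ofReal_iff hη_toReal_pos).2 h1
      _ = η := ENNReal.ofReal_toReal hη_ne_top
  exact lt_of_lt_of_le hlt (min_le_left _ _)
end

section
/- Let (Y, Tₙ) → (Y, T) in total variation, where Tₙ, T are random variables with values in [0,1] and Y ∈ {0,1}. Define Δₙ = |E_{Tₙ}[|E[Y | Tₙ = t] − t|] − E_T[|E[Y | T = t] − t|]|. Then lim_{n→∞} Δₙ = 0. -/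
open MeasureTheory Filter Set Topology

/-- Total variation distance between two measures. -/
noncomputable def tvDist {α : Type*} [MeasurableSpace α] (μ ν : Measure α) : ℝ :=
  ⨆ s : {s : Set α // MeasurableSet s}, |(μ s.1).toReal - (ν s.1).toReal|

/-- For a joint law `ν` of a pair `(Y, T)`, the calibration functional
`E_T[|E[Y | T = t] - t|]`, with the conditional expectation taken with respect to the
σ-algebra generated by the second coordinate. -/
noncomputable def calErr (ν : Measure (ℝ × ℝ)) : ℝ :=
  ∫ q, |(ν[(fun r : ℝ × ℝ => r.1) |
      MeasurableSpace.comap (Prod.snd : ℝ × ℝ → ℝ) Real.measurableSpace]) q - q.2| ∂ν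

/-!
With `g = E[Y - T | T]`, the calibration error is `∫ |g|`, and by duality between `L¹` and
`L^∞` on `σ(T)` it is the largest value of `E[w (Y - T)]` over `σ(T)`-measurable `w` with
`|w| ≤ 1`, attained at `w = sign g`. Testing the maximiser for one law against the other law
bounds the difference of the two calibration errors by the difference of the integrals of the
single function `w (Y - T)`, which takes values in `[-1, 1]`. By the layer-cake formula such a
difference is at most `2 d_TV`, so `Δₙ ≤ 2 d_TV((Y, Tₙ), (Y, T)) → 0`.
-/

section TotalVariation

variable {α : Type*} [MeasurableSpace α]

lemma tvDist_comm (μ ν : Measure α) : tvDist μ ν = tvDist ν μ :=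
  iSup_congr fun _ => abs_sub_comm _ _

lemma abs_measureReal_sub_le_tvDist (μ ν : Measure α) [IsFiniteMeasure μ] [IsFiniteMeasure ν]
    {s : Set α} (hs : MeasurableSet s) : |μ.real s - ν.real s| ≤ tvDist μ ν := by
  refine le_ciSup (f := fun t : {s : Set α // MeasurableSet s} => |μ.real t - ν.real t|)
    ⟨μ.real univ + ν.real univ, ?_⟩ ⟨s, hs⟩
  rintro _ ⟨t, rfl⟩
  have hμ : μ.real t ≤ μ.real univ := measureReal_mono (subset_univ _)
  have hν : ν.real t ≤ ν.real univ := measureReal_mono (subset_univ _)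
  exact abs_sub_le_iff.2 ⟨by linarith [measureReal_nonneg (μ := ν) (s := t.1)],
    by linarith [measureReal_nonneg (μ := μ) (s := t.1)]⟩

lemma integral_eq_integral_Ioc_measureReal_lt (ρ : Measure α) [IsFiniteMeasure ρ]
    {f : α → ℝ} (hf : AEMeasurable f ρ) (hf01 : ∀ᵐ x ∂ρ, f x ∈ Icc 0 1) :
    ∫ x, f x ∂ρ = ∫ t in Ioc 0 1, ρ.real {x | t < f x} := by
  rw [(Integrable.of_mem_Icc 0 1 hf hf01).integral_eq_integral_meas_lt
    (hf01.mono fun x hx => hx.1)]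
  refine setIntegral_eq_of_subset_of_forall_sdiff_eq_zero measurableSet_Ioi Ioc_subset_Ioi_self
    fun t ht => ?_
  have ht1 : 1 < t := by simpa using ht
  refine (measureReal_eq_zero_iff).2 (measure_mono_null (fun x hx => ?_) (ae_iff.1 hf01))
  exact fun h => (ht1.trans hx).not_ge h.2

lemma integrableOn_Ioc_measureReal_lt (ρ : Measure α) [IsFiniteMeasure ρ] (f : α → ℝ) :
    IntegrableOn (fun t => ρ.real {x | t < f x}) (Ioc 0 1) := by
  have hanti : Antitone fun t : ℝ => ρ.real {x | t < f x} :=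
    fun t t' htt' => measureReal_mono fun x hx => htt'.trans_lt hx
  refine Integrable.of_bound hanti.measurable.aestronglyMeasurable (ρ.real univ) ?_
  filter_upwards with t
  rw [Real.norm_eq_abs, abs_of_nonneg measureReal_nonneg]
  exact measureReal_mono (subset_univ _)

lemma abs_integral_sub_le_tvDist (μ ν : Measure α) [IsFiniteMeasure μ] [IsFiniteMeasure ν]
    {f : α → ℝ} (hf : Measurable f) (hμ : ∀ᵐ x ∂μ, f x ∈ Icc 0 1)
    (hν : ∀ᵐ x ∂ν, f x ∈ Icc 0 1) :
    |∫ x, f x ∂μ - ∫ x, f x ∂ν| ≤ tvDist μ ν := by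
  rw [integral_eq_integral_Ioc_measureReal_lt μ hf.aemeasurable hμ,
    integral_eq_integral_Ioc_measureReal_lt ν hf.aemeasurable hν,
    ← integral_sub (integrableOn_Ioc_measureReal_lt μ f) (integrableOn_Ioc_measureReal_lt ν f)]
  simpa using norm_setIntegral_le_of_norm_le_const (μ := volume) (s := Ioc (0 : ℝ) 1)
    (f := fun t => μ.real {x | t < f x} - ν.real {x | t < f x}) (C := tvDist μ ν) (by simp)
    fun t _ => abs_measureReal_sub_le_tvDist μ ν (hf measurableSet_Ioi)

lemma abs_integral_sub_le_two_mul_tvDist (μ ν : Measure α) [IsProbabilityMeasure μ]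
    [IsProbabilityMeasure ν] {f : α → ℝ} (hf : Measurable f)
    (hμ : ∀ᵐ x ∂μ, f x ∈ Icc (-1) 1) (hν : ∀ᵐ x ∂ν, f x ∈ Icc (-1) 1) :
    |∫ x, f x ∂μ - ∫ x, f x ∂ν| ≤ 2 * tvDist μ ν := by
  have hrescale : ∀ ρ : Measure α, [IsProbabilityMeasure ρ] →
      (∀ᵐ x ∂ρ, f x ∈ Icc (-1) 1) → ∫ x, (f x + 1) / 2 ∂ρ = (∫ x, f x ∂ρ + 1) / 2 := fun ρ _ h => by
    rw [integral_div, integral_add (Integrable.of_mem_Icc _ _ hf.aemeasurable h)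
      (integrable_const 1)]
    simp
  have hshift : ∀ x, f x ∈ Icc (-1) 1 → (f x + 1) / 2 ∈ Icc 0 1 := fun x hx =>
    ⟨by linarith [hx.1], by linarith [hx.2]⟩
  have h := abs_integral_sub_le_tvDist μ ν (by fun_prop) (hμ.mono hshift) (hν.mono hshift)
  rw [hrescale μ hμ, hrescale ν hν, ← sub_div, add_sub_add_right_eq_sub, abs_div,
    abs_two] at h
  linarith

end TotalVariation

section Variational

variable {α : Type*} {m mα : MeasurableSpace α} {ρ : Measure α} [IsFiniteMeasure ρ]

lemma integral_mul_condExp_s12 (hm : m ≤ mα) {w f : α → ℝ} (hw : StronglyMeasurable[m] w)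
    (hw1 : ∀ x, |w x| ≤ 1) (hf : Integrable f ρ) :
    ∫ x, w x * (ρ[f | m]) x ∂ρ = ∫ x, w x * f x ∂ρ := by
  rw [← integral_condExp hm (f := fun x => w x * f x)]
  exact integral_congr_ae
    (condExp_stronglyMeasurable_mul_of_bound hm hw hf 1 (ae_of_all _ hw1)).symm

lemma isGreatest_integral_mul_of_condExp (hm : m ≤ mα) {f : α → ℝ} (hf : Integrable f ρ) :
    IsGreatest ((fun w => ∫ x, w x * f x ∂ρ) ''
      {w | StronglyMeasurable[m] w ∧ ∀ x, |w x| ≤ 1}) (∫ x, |(ρ[f | m]) x| ∂ρ) := by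
  set g := ρ[f | m]
  have hg : StronglyMeasurable[m] g := stronglyMeasurable_condExp
  constructor
  · let w : α → ℝ := fun x => if 0 ≤ g x then 1 else -1
    have hw : StronglyMeasurable[m] w :=
      (Measurable.ite (measurableSet_le measurable_const hg.measurable) measurable_const
        measurable_const).stronglyMeasurable
    have hw1 : ∀ x, |w x| ≤ 1 := fun x => by by_cases h : 0 ≤ g x <;> simp [w, h]
    refine ⟨w, ⟨hw, hw1⟩, ?_⟩
    dsimp only
    rw [← integral_mul_condExp_s12 hm hw hw1 hf]
    refine integral_congr_ae (ae_of_all _ fun x => ?_)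
    by_cases h : 0 ≤ g x
    · simp [w, g, h, abs_of_nonneg h]
    · simp [w, g, h, abs_of_neg (not_le.1 h)]
  · rintro _ ⟨w, ⟨hw, hw1⟩, rfl⟩
    dsimp only
    rw [← integral_mul_condExp_s12 hm hw hw1 hf]
    refine integral_mono ((integrable_condExp).bdd_mul (hw.mono hm).aestronglyMeasurable
      (ae_of_all _ hw1)) integrable_condExp.abs fun x => ?_
    calc w x * g x ≤ |w x| * |g x| := by rw [← abs_mul]; exact le_abs_self _
      _ ≤ |g x| := mul_le_of_le_one_left (abs_nonneg _) (hw1 x)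

end Variational

section Calibration

local notation "σT" => MeasurableSpace.comap (Prod.snd : ℝ × ℝ → ℝ) Real.measurableSpace

lemma calErr_eq_integral_abs_condExp (ρ : Measure (ℝ × ℝ)) [IsFiniteMeasure ρ]
    (hY : Integrable Prod.fst ρ) (hT : Integrable Prod.snd ρ) :
    calErr ρ = ∫ q, |(ρ[Prod.fst - Prod.snd | σT]) q| ∂ρ := by
  have hT_meas : StronglyMeasurable[σT] (Prod.snd : ℝ × ℝ → ℝ) :=
    (comap_measurable Prod.snd).stronglyMeasurable
  refine integral_congr_ae ((condExp_sub hY hT σT).mono fun q hq => ?_)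
  dsimp only
  rw [hq, Pi.sub_apply, condExp_of_stronglyMeasurable measurable_snd.comap_le hT_meas hT]

lemma calErr_sub_le_two_mul_tvDist (μ ν : Measure (ℝ × ℝ)) [IsProbabilityMeasure μ]
    [IsProbabilityMeasure ν] (hμ : ∀ᵐ q ∂μ, q ∈ Icc (0 : ℝ) 1 ×ˢ Icc (0 : ℝ) 1)
    (hν : ∀ᵐ q ∂ν, q ∈ Icc (0 : ℝ) 1 ×ˢ Icc (0 : ℝ) 1) :
    calErr μ - calErr ν ≤ 2 * tvDist μ ν := by
  have hm : σT ≤ Prod.instMeasurableSpace := measurable_snd.comap_le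
  have hint : ∀ ρ : Measure (ℝ × ℝ), [IsProbabilityMeasure ρ] →
      (∀ᵐ q ∂ρ, q ∈ Icc (0 : ℝ) 1 ×ˢ Icc (0 : ℝ) 1) →
      Integrable Prod.fst ρ ∧ Integrable Prod.snd ρ := fun ρ _ h =>
    ⟨.of_mem_Icc 0 1 measurable_fst.aemeasurable (h.mono fun q hq => hq.1),
      .of_mem_Icc 0 1 measurable_snd.aemeasurable (h.mono fun q hq => hq.2)⟩
  obtain ⟨hYμ, hTμ⟩ := hint μ hμ
  obtain ⟨hYν, hTν⟩ := hint ν hν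
  obtain ⟨⟨w, ⟨hw, hw1⟩, hwμ⟩, -⟩ :=
    isGreatest_integral_mul_of_condExp hm (hYμ.sub hTμ)
  have hwν := (isGreatest_integral_mul_of_condExp hm (hYν.sub hTν)).2 ⟨w, ⟨hw, hw1⟩, rfl⟩
  rw [← calErr_eq_integral_abs_condExp μ hYμ hTμ] at hwμ
  rw [← calErr_eq_integral_abs_condExp ν hYν hTν] at hwν
  have hrange : ∀ q ∈ Icc (0 : ℝ) 1 ×ˢ Icc (0 : ℝ) 1, w q * (q.1 - q.2) ∈ Icc (-1) 1 :=
    fun q hq => by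
      rw [mem_Icc, ← abs_le, abs_mul]
      exact mul_le_one₀ (hw1 q) (abs_nonneg _)
        (abs_sub_le_of_nonneg_of_le hq.1.1 hq.1.2 hq.2.1 hq.2.2)
  have h := abs_integral_sub_le_two_mul_tvDist μ ν (f := fun q => w q * (q.1 - q.2))
    ((hw.measurable.mono hm le_rfl).mul (measurable_fst.sub measurable_snd))
    (hμ.mono hrange) (hν.mono hrange)
  simp only [Pi.sub_apply] at hwμ hwν
  linarith [le_abs_self (∫ q, w q * (q.1 - q.2) ∂μ - ∫ q, w q * (q.1 - q.2) ∂ν)]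

end Calibration

/-- If `(Y, Tₙ) → (Y, T)` in total variation, with `Tₙ, T ∈ [0,1]` and
`Y ∈ {0,1}`, then `Δₙ = |E_{Tₙ}[|E[Y|Tₙ=t]−t|] − E_T[|E[Y|T=t]−t|]| → 0`. -/
theorem stmt12 (νs : ℕ → Measure (ℝ × ℝ)) (ν : Measure (ℝ × ℝ))
    [∀ n, IsProbabilityMeasure (νs n)] [IsProbabilityMeasure ν]
    (hYn : ∀ n, ∀ᵐ q ∂(νs n), q.1 = 0 ∨ q.1 = 1) (hY : ∀ᵐ q ∂ν, q.1 = 0 ∨ q.1 = 1)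
    (hTn : ∀ n, ∀ᵐ q ∂(νs n), q.2 ∈ Set.Icc (0 : ℝ) 1)
    (hT : ∀ᵐ q ∂ν, q.2 ∈ Set.Icc (0 : ℝ) 1)
    (htv : Tendsto (fun n => tvDist (νs n) ν) atTop (𝓝 0)) :
    Tendsto (fun n => |calErr (νs n) - calErr ν|) atTop (𝓝 0) := by
  have hunit : ∀ ρ : Measure (ℝ × ℝ), (∀ᵐ q ∂ρ, q.1 = 0 ∨ q.1 = 1) →
      (∀ᵐ q ∂ρ, q.2 ∈ Icc (0 : ℝ) 1) → ∀ᵐ q ∂ρ, q ∈ Icc (0 : ℝ) 1 ×ˢ Icc (0 : ℝ) 1 :=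
    fun ρ hY hT => by
      filter_upwards [hY, hT] with q hq1 hq2
      exact ⟨by rcases hq1 with h | h <;> simp [h], hq2⟩
  have hbound : ∀ n, |calErr (νs n) - calErr ν| ≤ 2 * tvDist (νs n) ν := fun n => by
    have h₁ := calErr_sub_le_two_mul_tvDist (νs n) ν (hunit _ (hYn n) (hTn n)) (hunit _ hY hT)
    have h₂ := calErr_sub_le_two_mul_tvDist ν (νs n) (hunit _ hY hT) (hunit _ (hYn n) (hTn n))
    rw [tvDist_comm] at h₂
    exact abs_sub_le_iff.2 ⟨h₁, h₂⟩
  exact squeeze_zero (fun n => abs_nonneg _) hbound (by simpa using htv.const_mul 2)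
end
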